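/- arXiv:2504.03835 — 4 statements merged into one kernel-verified Lean document; each statement's English description precedes it below -/
import Mathlib

section
/- Let d ≥ 1 and let Φ be a pure density matrix on ℂ² ⊗ ℂ^d (i.e. Φ = |Ψ⟩⟨Ψ| for a unit vector Ψ) whose partial trace over ℂ^d equals the maximally mixed qubit state (1/2)·I₂, and let φ be any pure density matrix on ℂ². Then there exists no density matrix ψ on ℂ² ⊗ ℂ^d such that the range (support) of ψ is contained in the range of Φ and the range of the partial trace of ψ over ℂ^d is contained in the range of φ. (This is the mathematical core of the state agreement paradox, Theorem 1: no quantum state exists on which both Alice, who assigns a pure state to the qubit Q, and Bob, who assigns a pure entangled state to the joint system Q L_A, can agree.) -/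
/-!
Bob's state `Φ = |Ψ⟩⟨Ψ|` is the projection onto the line `ℂΨ`, so every state `ψ` supported
there satisfies `ψ = Φ ψ Φ`; since `Φ ψ Φ` is a multiple of `Φ`, normalisation forces `ψ = Φ`.
The marginal of `ψ` on the qubit is then the maximally mixed state, whose support is all of
`ℂ²` and so cannot lie in the one-dimensional support of Alice's pure state `φ`.
-/

open Matrix BigOperators
open scoped ComplexOrder

/-- Partial trace over the second tensor factor. -/
noncomputable def ptrace2 {d : ℕ} (ρ : Matrix (Fin 2 × Fin d) (Fin 2 × Fin d) ℂ) :
    Matrix (Fin 2) (Fin 2) ℂ :=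
  fun i j => ∑ k : Fin d, ρ (i, k) (j, k)

/-- A density matrix: positive semidefinite with trace one. -/
def IsDensity {n : Type*} [Fintype n] [DecidableEq n] (ρ : Matrix n n ℂ) : Prop :=
  ρ.PosSemidef ∧ ρ.trace = 1

/-- A pure density matrix: `|Ψ⟩⟨Ψ|` for a unit vector `Ψ`. -/
def IsPureDensity {n : Type*} [Fintype n] [DecidableEq n] (ρ : Matrix n n ℂ) : Prop :=
  IsDensity ρ ∧ ∃ v : n → ℂ, (∑ i, star (v i) * v i) = 1 ∧ ρ = Matrix.vecMulVec v (star v)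

/-- The support (range) of a matrix, viewed as a linear map. -/
noncomputable def supp {n : Type*} [Fintype n] [DecidableEq n] (ρ : Matrix n n ℂ) : Submodule ℂ (n → ℂ) :=
  LinearMap.range ρ.mulVecLin

section

variable {n : Type*} [Fintype n]

lemma vecMulVec_star_mulVec_of_mem_span {v x : n → ℂ} (hv : star v ⬝ᵥ v = 1)
    (hx : x ∈ Submodule.span ℂ {v}) : vecMulVec v (star v) *ᵥ x = x := by
  obtain ⟨c, rfl⟩ := Submodule.mem_span_singleton.mp hx
  rw [mulVec_smul, vecMulVec_mulVec, hv, MulOpposite.op_one, one_smul]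

lemma not_top_le_span_singleton (hn : 1 < Fintype.card n) (w : n → ℂ) :
    ¬ (⊤ : Submodule ℂ (n → ℂ)) ≤ Submodule.span ℂ {w} := fun h => by
  have := Submodule.finrank_mono h
  rw [finrank_top, Module.finrank_fintype_fun_eq_card] at this
  have : Module.finrank ℂ (Submodule.span ℂ {w}) ≤ 1 :=
    (finrank_span_le_card ({w} : Set (n → ℂ))).trans (by simp)
  omega

variable [DecidableEq n]

lemma supp_vecMulVec_le_span (v w : n → ℂ) : supp (vecMulVec v w) ≤ Submodule.span ℂ {v} := by
  rintro _ ⟨x, rfl⟩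
  rw [mulVecLin_apply, vecMulVec_mulVec, op_smul_eq_smul]
  exact Submodule.smul_mem _ _ (Submodule.mem_span_singleton_self v)

lemma supp_eq_top_of_isUnit {A : Matrix n n ℂ} (hA : IsUnit A) : supp A = ⊤ :=
  LinearMap.range_eq_top.mpr (mulVec_surjective_iff_isUnit.mpr hA)

lemma vecMulVec_star_mul_of_supp_le {v : n → ℂ} (hv : star v ⬝ᵥ v = 1) {A : Matrix n n ℂ}
    (hA : supp A ≤ Submodule.span ℂ {v}) : vecMulVec v (star v) * A = A :=
  ext_iff_mulVec.mpr fun x => by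
    rw [← mulVec_mulVec]
    exact vecMulVec_star_mulVec_of_mem_span hv (hA ⟨x, rfl⟩)

lemma eq_vecMulVec_star_of_supp_le {v : n → ℂ} (hv : star v ⬝ᵥ v = 1) {ψ : Matrix n n ℂ}
    (hψ : ψ.IsHermitian) (htr : ψ.trace = 1) (hsupp : supp ψ ≤ Submodule.span ℂ {v}) :
    ψ = vecMulVec v (star v) := by
  set P := vecMulVec v (star v)
  have hPψ : P * ψ = ψ := vecMulVec_star_mul_of_supp_le hv hsupp
  have hψP : ψ * P = ψ := by
    have := congrArg conjTranspose hPψ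
    rwa [conjTranspose_mul, hψ.eq, conjTranspose_vecMulVec, star_star] at this
  have hsandwich : P * ψ * P = ((star v ᵥ* ψ) ⬝ᵥ v) • P := by
    rw [vecMulVec_mul, vecMulVec_mul_vecMulVec, vecMulVec_smul]
  have htrP : P.trace = 1 := by rw [trace_vecMulVec, dotProduct_comm, hv]
  have hc : (star v ᵥ* ψ) ⬝ᵥ v = 1 := by
    simpa [hψP, hPψ, htrP, htr, eq_comm] using congrArg trace hsandwich
  rwa [hPψ, hψP, hc, one_smul] at hsandwich

end

theorem state_agreement_paradox_general {d : ℕ}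
    (Φ : Matrix (Fin 2 × Fin d) (Fin 2 × Fin d) ℂ) (hΦ : IsPureDensity Φ)
    (hΦmarg : ptrace2 Φ = (1 / 2 : ℂ) • (1 : Matrix (Fin 2) (Fin 2) ℂ))
    (φ : Matrix (Fin 2) (Fin 2) ℂ) (hφ : IsPureDensity φ) :
    ¬ ∃ ψ : Matrix (Fin 2 × Fin d) (Fin 2 × Fin d) ℂ,
        IsDensity ψ ∧ supp ψ ≤ supp Φ ∧ supp (ptrace2 ψ) ≤ supp φ := by
  rintro ⟨ψ, hψ, hψΦ, hψφ⟩
  obtain ⟨-, Ψ, hΨ, rfl⟩ := hΦ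
  obtain ⟨-, w, -, rfl⟩ := hφ
  have hψ_eq : ψ = vecMulVec Ψ (star Ψ) :=
    eq_vecMulVec_star_of_supp_le hΨ hψ.1.1 hψ.2 (hψΦ.trans (supp_vecMulVec_le_span _ _))
  have hmarg_top : supp (ptrace2 ψ) = ⊤ := by
    rw [hψ_eq, hΦmarg]
    exact supp_eq_top_of_isUnit (isUnit_one.smul (Units.mk0 (1 / 2 : ℂ) (by norm_num)))
  exact not_top_le_span_singleton (by simp) w
    (hmarg_top ▸ hψφ.trans (supp_vecMulVec_le_span w _))

/-- State agreement paradox (Theorem 1, mathematical core): if Bob's state `Φ` on `Q L_A`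
is pure with maximally mixed marginal on the qubit `Q`, and Alice's state `φ` on `Q` is pure,
then there is no joint state `ψ` both can agree on. -/
theorem state_agreement_paradox {d : ℕ} (hd : 1 ≤ d)
    (Φ : Matrix (Fin 2 × Fin d) (Fin 2 × Fin d) ℂ) (hΦ : IsPureDensity Φ)
    (hΦmarg : ptrace2 Φ = (1 / 2 : ℂ) • (1 : Matrix (Fin 2) (Fin 2) ℂ))
    (φ : Matrix (Fin 2) (Fin 2) ℂ) (hφ : IsPureDensity φ) :
    ¬ ∃ ψ : Matrix (Fin 2 × Fin d) (Fin 2 × Fin d) ℂ,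
        IsDensity ψ ∧ supp ψ ≤ supp Φ ∧ supp (ptrace2 ψ) ≤ supp φ :=
  state_agreement_paradox_general Φ hΦ hΦmarg φ hφ
end

section
/- Let |0⟩, |1⟩ be the computational basis of ℂ² and |0̄⟩ = (|0⟩+|1⟩)/√2, |1̄⟩ = (|0⟩−|1⟩)/√2 the diagonal basis. There exist no functions P : {0,1} × {0,1} → ℝ≥0 and σ : {0,1} × {0,1} → {density matrices on ℂ²} such that (i) for every r_A ∈ {0,1}: Σ_{r̄_B ∈ {0,1}} P(r_A, r̄_B) · σ(r_A, r̄_B) = (1/2)|r_A⟩⟨r_A|, and (ii) for every r̄_B ∈ {0,1}: Σ_{r_A ∈ {0,1}} P(r_A, r̄_B) · σ(r_A, r̄_B) = (1/2)|r̄_B⟩⟨r̄_B| (with |0̄⟩⟨0̄| for r̄_B = 0 and |1̄⟩⟨1̄| for r̄_B = 1). (This is the nonexistence of the update rule ℛ, evaluated on a qubit maximally entangled with the reference S, which is the mathematical core of the objective outcome paradox, Theorem 2.) -/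
open Matrix BigOperators
open scoped ComplexOrder

/-- The computational basis vectors `|0⟩, |1⟩` of `ℂ²`. -/
def ket (r : Fin 2) : Fin 2 → ℂ := fun i => if i = r then 1 else 0

/-- The diagonal basis vectors `|0̄⟩ = (|0⟩+|1⟩)/√2` and `|1̄⟩ = (|0⟩−|1⟩)/√2`. -/
noncomputable def ketbar (r : Fin 2) : Fin 2 → ℂ :=
  fun i => ((Real.sqrt 2)⁻¹ : ℂ) * (if i = 0 then 1 else if r = 0 then 1 else -1)

/-- The rank-one projector `|v⟩⟨v|`. -/
def proj {n : Type*} [Fintype n] (v : n → ℂ) : Matrix n n ℂ :=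
  Matrix.vecMulVec v (star v)

/-!
Condition (i) writes `(1/2)|r_A⟩⟨r_A|` as a sum of the positive semidefinite matrices
`P(r_A, r̄_B) σ(r_A, r̄_B)`. A positive semidefinite summand vanishes on every row and column where
the sum has a zero diagonal entry, so all these matrices are diagonal in the computational basis.
Hence the left side of (ii) is diagonal, whereas `(1/2)|0̄⟩⟨0̄|` has off-diagonal entry `1/4`.
-/

namespace Matrix

theorem diag_eq_zero_of_sum_posSemidef {R ι n : Type*} [Ring R] [PartialOrder R] [StarRing R]
    [IsOrderedAddMonoid R] {s : Finset ι} {A : ι → Matrix n n R}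
    (hA : ∀ k ∈ s, (A k).PosSemidef) {i : n} (hi : (∑ k ∈ s, A k) i i = 0) {k : ι} (hk : k ∈ s) :
    A k i i = 0 := by
  rw [Matrix.sum_apply] at hi
  exact (Finset.sum_eq_zero_iff_of_nonneg fun k hk => (hA k hk).diag_nonneg).mp hi k hk

namespace PosSemidef

variable {𝕜 n : Type*} [RCLike 𝕜] [Fintype n] {A : Matrix n n 𝕜}

theorem apply_eq_zero_of_diag_eq_zero_right (hA : A.PosSemidef) {i : n} (hi : A i i = 0)
    (j : n) : A j i = 0 := by
  classical
  have hquad : star (Pi.single i 1 : n → 𝕜) ⬝ᵥ A *ᵥ Pi.single i 1 = 0 := by simpa using hi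
  simpa using congrFun ((hA.dotProduct_mulVec_zero_iff _).mp hquad) j

theorem apply_eq_zero_of_diag_eq_zero_left (hA : A.PosSemidef) {i : n} (hi : A i i = 0)
    (j : n) : A i j = 0 := by
  rw [← hA.isHermitian.apply i j, hA.apply_eq_zero_of_diag_eq_zero_right hi j, star_zero]

end PosSemidef

end Matrix

theorem proj_ket_apply_of_ne {r i : Fin 2} (h : i ≠ r) : proj (ket r) i i = 0 := by
  simp [proj, vecMulVec_apply, ket, h]

theorem proj_ketbar_zero_apply_zero_one : proj (ketbar 0) 0 1 = 1 / 2 := by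
  have hsqrt : ((Real.sqrt 2 : ℝ) : ℂ) * (Real.sqrt 2 : ℝ) = 2 := by
    exact_mod_cast Real.mul_self_sqrt zero_le_two
  simp [proj, vecMulVec_apply, ketbar, ← mul_inv, hsqrt]

theorem sum_apply_zero_one_eq_zero_of_sum_eq_smul_proj_ket
    {τ : Fin 2 → Fin 2 → Matrix (Fin 2) (Fin 2) ℂ} (hτ : ∀ a b, (τ a b).PosSemidef) {c : ℂ}
    (hsum : ∀ a, ∑ b, τ a b = c • proj (ket a)) (b : Fin 2) : (∑ a, τ a b) 0 1 = 0 := by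
  have hdiag (a b i : Fin 2) (hi : i ≠ a) : τ a b i i = 0 :=
    diag_eq_zero_of_sum_posSemidef (fun k _ => hτ a k)
      (by rw [hsum a, Matrix.smul_apply, proj_ket_apply_of_ne hi, smul_zero]) (Finset.mem_univ b)
  rw [Matrix.sum_apply, Fin.sum_univ_two,
    (hτ 0 b).apply_eq_zero_of_diag_eq_zero_right (hdiag 0 b 1 (by decide)) 0,
    (hτ 1 b).apply_eq_zero_of_diag_eq_zero_left (hdiag 1 b 0 (by decide)) 1, add_zero]

/-- Objective outcome paradox (core of Theorem 2): there is no update rule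
`(P, σ)` compatible with both Alice's computational-basis measurement and Bob's
diagonal-basis measurement on a qubit maximally entangled with the reference `S`. -/
theorem no_update_rule :
    ¬ ∃ (P : Fin 2 → Fin 2 → NNReal) (σ : Fin 2 → Fin 2 → Matrix (Fin 2) (Fin 2) ℂ),
      (∀ rA rB, IsDensity (σ rA rB)) ∧
      (∀ rA : Fin 2,
        ∑ rB : Fin 2, ((P rA rB : ℝ) : ℂ) • σ rA rB = ((1 : ℂ) / 2) • proj (ket rA)) ∧
      (∀ rB : Fin 2,
        ∑ rA : Fin 2, ((P rA rB : ℝ) : ℂ) • σ rA rB = ((1 : ℂ) / 2) • proj (ketbar rB)) := by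
  rintro ⟨P, σ, hσ, hA, hB⟩
  have hterm (rA rB : Fin 2) : (((P rA rB : ℝ) : ℂ) • σ rA rB).PosSemidef :=
    (hσ rA rB).1.smul (by exact_mod_cast (P rA rB).2)
  have h01 := sum_apply_zero_one_eq_zero_of_sum_eq_smul_proj_ket hterm hA 0
  rw [hB 0, Matrix.smul_apply, proj_ketbar_zero_apply_zero_one] at h01
  norm_num at h01
end

section
/- Let |0⟩, |1⟩ be the computational basis of ℂ² and |0̄⟩ = (|0⟩+|1⟩)/√2, |1̄⟩ = (|0⟩−|1⟩)/√2 the diagonal basis, and set T₁ = (1/2)(|0⟩⟨0| ⊗ |0⟩⟨0| + |1⟩⟨1| ⊗ |1⟩⟨1|) and T₂ = (1/2)(|0⟩⟨0| ⊗ |0̄⟩⟨0̄| + |1⟩⟨1| ⊗ |1̄⟩⟨1̄|). Then there exists ε > 0 such that no density matrix σ on ℂ² ⊗ ℂ² ⊗ ℂ² (factors R_A, R_B, S) satisfies both ‖tr_{R_B}(σ) − T₁‖₁ ≤ ε and ‖tr_{R_A}(σ) − T₂‖₁ ≤ ε, where ‖·‖₁ denotes the trace norm. (Robust version: even an approximate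 update rule cannot exist.) -/
/-!
Index the qubits as `(R_A, R_B, S)`. Every entry of a matrix is bounded by its trace norm.
Applied to `T₁`, which correlates `R_A` and `S` perfectly, this makes the weights
`σ(001, 001)` and `σ(100, 100)` at most `ε`; applied to `T₂`, it makes the coherence
`σ(000, 001) + σ(100, 101)` of `S` in the `R_B = 0` block `ε`-close to `1/4`. Positivity of `σ`
bounds each of these two coherences by the geometric mean of two diagonal entries, one of which is
at most `ε`, so `1/4 ≤ ε + 2√ε`, which fails for `ε = 1/100`.
-/

open Matrix BigOperators Kronecker
open scoped ComplexOrder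

/-- Partial trace over the middle factor `R_B` of a tripartite state on `R_A ⊗ R_B ⊗ S`. -/
noncomputable def ptraceRB (σ : Matrix (Fin 2 × Fin 2 × Fin 2) (Fin 2 × Fin 2 × Fin 2) ℂ) :
    Matrix (Fin 2 × Fin 2) (Fin 2 × Fin 2) ℂ :=
  fun p q => ∑ k : Fin 2, σ (p.1, k, p.2) (q.1, k, q.2)

/-- Partial trace over the first factor `R_A` of a tripartite state on `R_A ⊗ R_B ⊗ S`. -/
noncomputable def ptraceRA (σ : Matrix (Fin 2 × Fin 2 × Fin 2) (Fin 2 × Fin 2 × Fin 2) ℂ) :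
    Matrix (Fin 2 × Fin 2) (Fin 2 × Fin 2) ℂ :=
  fun p q => ∑ k : Fin 2, σ (k, p.1, p.2) (k, q.1, q.2)

/-- The trace norm `‖A‖₁ = tr √(AᴴA)` of a complex matrix. -/
noncomputable def traceNorm {n : Type*} [Fintype n] [DecidableEq n] (A : Matrix n n ℂ) : ℝ :=
  ((Matrix.posSemidef_conjTranspose_mul_self A).1.eigenvectorUnitary.1 *
      Matrix.diagonal (((↑) : ℝ → ℂ) ∘ (Real.sqrt ·) ∘ (Matrix.posSemidef_conjTranspose_mul_self A).1.eigenvalues) *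
      (star (Matrix.posSemidef_conjTranspose_mul_self A).1.eigenvectorUnitary : Matrix n n ℂ)).trace.re

namespace Matrix

variable {n 𝕜 : Type*} [RCLike 𝕜]

theorem re_conjTranspose_mul_self_apply [Fintype n] (A : Matrix n n 𝕜) (j : n) :
    RCLike.re ((Aᴴ * A) j j) = ∑ k, ‖A k j‖ ^ 2 := by
  simp only [mul_apply, conjTranspose_apply, RCLike.star_def, RCLike.conj_mul, map_sum]
  norm_cast

theorem norm_apply_sq_le_re_conjTranspose_mul_self_apply [Fintype n]
    (A : Matrix n n 𝕜) (i j : n) : ‖A i j‖ ^ 2 ≤ RCLike.re ((Aᴴ * A) j j) := by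
  rw [re_conjTranspose_mul_self_apply]
  exact Finset.single_le_sum (f := fun k => ‖A k j‖ ^ 2) (fun _ _ => sq_nonneg _)
    (Finset.mem_univ i)

namespace PosSemidef

variable {M : Matrix n n 𝕜}

theorem re_apply_nonneg (hM : M.PosSemidef) (i : n) : 0 ≤ RCLike.re (M i i) :=
  (RCLike.nonneg_iff.mp hM.diag_nonneg).1

theorem re_apply_le_re_trace [Fintype n] (hM : M.PosSemidef) (i : n) :
    RCLike.re (M i i) ≤ RCLike.re M.trace := by
  rw [trace, map_sum]
  exact Finset.single_le_sum (f := fun k => RCLike.re (M k k)) (fun k _ => hM.re_apply_nonneg k)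
    (Finset.mem_univ i)

theorem re_apply_le_norm_add_apply (hM : M.PosSemidef) (i j : n) :
    RCLike.re (M i i) ≤ ‖M i i + M j j‖ :=
  calc RCLike.re (M i i) ≤ RCLike.re (M i i + M j j) := by
        rw [map_add]; linarith [hM.re_apply_nonneg j]
    _ ≤ ‖M i i + M j j‖ := RCLike.re_le_norm _

theorem norm_apply_sq_le_re_apply_mul_re_apply [Fintype n] [DecidableEq n] (hM : M.PosSemidef)
    (i j : n) :
    ‖M i j‖ ^ 2 ≤ RCLike.re (M i i) * RCLike.re (M j j) := by
  let := M.toSeminormedAddCommGroup hM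
  let := M.toInnerProductSpace hM
  have hinner (k l : n) : inner 𝕜 (Pi.single k 1 : n → 𝕜) (Pi.single l 1) = M k l := by
    change (M *ᵥ Pi.single l 1) ⬝ᵥ star (Pi.single k 1) = M k l
    simp [mulVec_single]
  have h := inner_mul_inner_self_le (𝕜 := 𝕜) (Pi.single i 1 : n → 𝕜) (Pi.single j 1)
  rwa [hinner, hinner, hinner, hinner, ← hM.isHermitian.apply j i, norm_star, ← sq] at h

theorem re_mul_self_apply_le_re_trace_sq [Fintype n] [DecidableEq n] (hM : M.PosSemidef)
    (j : n) :
    RCLike.re ((M * M) j j) ≤ RCLike.re M.trace ^ 2 := by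
  have hre_trace_nonneg := (hM.re_apply_nonneg j).trans (hM.re_apply_le_re_trace j)
  calc RCLike.re ((M * M) j j) = ∑ k, ‖M k j‖ ^ 2 := by
        rw [← re_conjTranspose_mul_self_apply, hM.isHermitian.eq]
    _ ≤ ∑ k, RCLike.re (M k k) * RCLike.re (M j j) :=
        Finset.sum_le_sum fun k _ => hM.norm_apply_sq_le_re_apply_mul_re_apply k j
    _ = RCLike.re M.trace * RCLike.re (M j j) := by rw [← Finset.sum_mul, trace, map_sum]; rfl
    _ ≤ RCLike.re M.trace ^ 2 := by
        rw [sq]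
        exact mul_le_mul_of_nonneg_left (hM.re_apply_le_re_trace j) hre_trace_nonneg

end PosSemidef

end Matrix

section TraceNorm

open scoped MatrixOrder

variable {n : Type*} [Fintype n] [DecidableEq n]

theorem traceNorm_eq_re_trace_abs (A : Matrix n n ℂ) : traceNorm A = (CFC.abs A).trace.re := by
  rw [CFC.abs, star_eq_conjTranspose,
    CFC.sqrt_eq_real_sqrt _ (posSemidef_conjTranspose_mul_self A).nonneg, cfcₙ_eq_cfc,
    (posSemidef_conjTranspose_mul_self A).1.cfc_eq]
  rfl

theorem traceNorm_nonneg (A : Matrix n n ℂ) : 0 ≤ traceNorm A := by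
  rw [traceNorm_eq_re_trace_abs]
  exact (RCLike.nonneg_iff.mp (CFC.abs_nonneg A).posSemidef.trace_nonneg).1

theorem norm_apply_le_traceNorm (A : Matrix n n ℂ) (i j : n) : ‖A i j‖ ≤ traceNorm A := by
  refine (pow_le_pow_iff_left₀ (norm_nonneg _) (traceNorm_nonneg A) two_ne_zero).mp ?_
  rw [traceNorm_eq_re_trace_abs]
  calc ‖A i j‖ ^ 2 ≤ ((Aᴴ * A) j j).re :=
        A.norm_apply_sq_le_re_conjTranspose_mul_self_apply i j
    _ = ((CFC.abs A * CFC.abs A) j j).re := by rw [CFC.abs_mul_abs, star_eq_conjTranspose]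
    _ ≤ (CFC.abs A).trace.re ^ 2 :=
        (CFC.abs_nonneg A).posSemidef.re_mul_self_apply_le_re_trace_sq j

end TraceNorm

namespace IsDensity

variable {n : Type*} [Fintype n] [DecidableEq n] {ρ : Matrix n n ℂ}

theorem re_apply_le_one (hρ : IsDensity ρ) (i : n) : (ρ i i).re ≤ 1 := by
  simpa [hρ.2] using hρ.1.re_apply_le_re_trace i

theorem norm_apply_sq_le_re_apply_left (hρ : IsDensity ρ) (i j : n) :
    ‖ρ i j‖ ^ 2 ≤ (ρ i i).re :=
  (hρ.1.norm_apply_sq_le_re_apply_mul_re_apply i j).trans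
    (mul_le_of_le_one_right (hρ.1.re_apply_nonneg i) (hρ.re_apply_le_one j))

theorem norm_apply_sq_le_re_apply_right (hρ : IsDensity ρ) (i j : n) :
    ‖ρ i j‖ ^ 2 ≤ (ρ j j).re :=
  (hρ.1.norm_apply_sq_le_re_apply_mul_re_apply i j).trans
    (mul_le_of_le_one_left (hρ.1.re_apply_nonneg j) (hρ.re_apply_le_one i))

end IsDensity

theorem norm_le_norm_add_norm_add_norm_add_sub {E : Type*} [SeminormedAddCommGroup E]
    (x y c : E) : ‖c‖ ≤ ‖x‖ + ‖y‖ + ‖x + y - c‖ :=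
  calc ‖c‖ = ‖(x + y) - (x + y - c)‖ := by rw [sub_sub_cancel]
    _ ≤ ‖x + y‖ + ‖x + y - c‖ := norm_sub_le _ _
    _ ≤ ‖x‖ + ‖y‖ + ‖x + y - c‖ := by gcongr; exact norm_add_le x y

theorem proj_apply {n : Type*} [Fintype n] (v : n → ℂ) (i j : n) :
    proj v i j = v i * star (v j) :=
  vecMulVec_apply ..

noncomputable def T₁ : Matrix (Fin 2 × Fin 2) (Fin 2 × Fin 2) ℂ :=
  ((1 : ℂ) / 2) • (proj (ket 0) ⊗ₖ proj (ket 0) + proj (ket 1) ⊗ₖ proj (ket 1))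

noncomputable def T₂ : Matrix (Fin 2 × Fin 2) (Fin 2 × Fin 2) ℂ :=
  ((1 : ℂ) / 2) • (proj (ket 0) ⊗ₖ proj (ketbar 0) + proj (ket 1) ⊗ₖ proj (ketbar 1))

theorem T₁_apply_zero_one : T₁ (0, 1) (0, 1) = 0 := by
  simp [T₁, proj_apply, ket]

theorem T₁_apply_one_zero : T₁ (1, 0) (1, 0) = 0 := by
  simp [T₁, proj_apply, ket]

theorem T₂_apply_zero_zero_zero_one : T₂ (0, 0) (0, 1) = 1 / 4 := by
  have hsqrt : ((Real.sqrt 2 : ℂ))⁻¹ * (Real.sqrt 2 : ℂ)⁻¹ = 1 / 2 := by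
    rw [← mul_inv, ← Complex.ofReal_mul, Real.mul_self_sqrt zero_le_two]; norm_num
  norm_num [T₂, proj_apply, ket, ketbar, hsqrt]

/-- Robust objective outcome paradox: there is `ε > 0` such that no tripartite state on
`R_A ⊗ R_B ⊗ S` is `ε`-close in trace norm to both required marginals simultaneously. -/
theorem no_approximate_update_rule :
    ∃ ε : ℝ, 0 < ε ∧
      ∀ σ : Matrix (Fin 2 × Fin 2 × Fin 2) (Fin 2 × Fin 2 × Fin 2) ℂ,
        IsDensity σ →
        ¬ (traceNorm (ptraceRB σ -
              ((1 : ℂ) / 2) •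
                (proj (ket 0) ⊗ₖ proj (ket 0) + proj (ket 1) ⊗ₖ proj (ket 1))) ≤ ε ∧
           traceNorm (ptraceRA σ -
              ((1 : ℂ) / 2) •
                (proj (ket 0) ⊗ₖ proj (ketbar 0) + proj (ket 1) ⊗ₖ proj (ketbar 1))) ≤ ε) := by
  refine ⟨1 / 100, by norm_num, fun σ hσ ⟨h₁, h₂⟩ => ?_⟩
  have w₁ : (σ (0, 0, 1) (0, 0, 1)).re ≤ 1 / 100 := by
    refine (hσ.1.re_apply_le_norm_add_apply _ (0, 1, 1)).trans ?_
    simpa [ptraceRB, Fin.sum_univ_two, T₁_apply_zero_one] using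
      (norm_apply_le_traceNorm (ptraceRB σ - T₁) (0, 1) (0, 1)).trans h₁
  have w₂ : (σ (1, 0, 0) (1, 0, 0)).re ≤ 1 / 100 := by
    refine (hσ.1.re_apply_le_norm_add_apply _ (1, 1, 0)).trans ?_
    simpa [ptraceRB, Fin.sum_univ_two, T₁_apply_one_zero] using
      (norm_apply_le_traceNorm (ptraceRB σ - T₁) (1, 0) (1, 0)).trans h₁
  have hcoherence : ‖σ (0, 0, 0) (0, 0, 1) + σ (1, 0, 0) (1, 0, 1) - 1 / 4‖ ≤ 1 / 100 := by
    simpa [ptraceRA, Fin.sum_univ_two, T₂_apply_zero_zero_zero_one] using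
      (norm_apply_le_traceNorm (ptraceRA σ - T₂) (0, 0) (0, 1)).trans h₂
  have c₁ : ‖σ (0, 0, 0) (0, 0, 1)‖ ≤ 1 / 10 := by
    refine (pow_le_pow_iff_left₀ (norm_nonneg _) (by norm_num) two_ne_zero).mp ?_
    linarith [hσ.norm_apply_sq_le_re_apply_right (0, 0, 0) (0, 0, 1)]
  have c₂ : ‖σ (1, 0, 0) (1, 0, 1)‖ ≤ 1 / 10 := by
    refine (pow_le_pow_iff_left₀ (norm_nonneg _) (by norm_num) two_ne_zero).mp ?_
    linarith [hσ.norm_apply_sq_le_re_apply_left (1, 0, 0) (1, 0, 1)]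
  have h := norm_le_norm_add_norm_add_norm_add_sub (σ (0, 0, 0) (0, 0, 1))
    (σ (1, 0, 0) (1, 0, 1)) (1 / 4 : ℂ)
  norm_num at h
  linarith
end

section
/- Let a and b be unit vectors in a finite-dimensional complex inner product space. Then the operator norm of the operator T = (1/2)(|a⟩⟨a| + |b⟩⟨b|), i.e. the maximum of ⟨x, T x⟩ over unit vectors x, equals (1 + |⟨a, b⟩|)/2. -/
/-!
For `x` with `α = ⟪a, x⟫` and `β = ⟪b, x⟫`, the quadratic form of `T` is `(|α|² + |β|²) / 2`.
With `y = α • a + β • b` one has `|α|² + |β|² = ⟪x, y⟫ ≤ ‖x‖ ‖y‖`, while expanding `‖y‖²` and using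
`2 |α| |β| ≤ |α|² + |β|²` gives `‖y‖² ≤ (|α|² + |β|²)(1 + |⟪a, b⟫|)`; together these bound
`|α|² + |β|²` by `(1 + |⟪a, b⟫|) ‖x‖²`. Equality holds for `x` proportional to `a + u • b`,
where the phase `u` makes `u ⟪a, b⟫ = |⟪a, b⟫|`.
-/

open scoped InnerProductSpace

section

variable {𝕜 E : Type*} [RCLike 𝕜] [NormedAddCommGroup E] [InnerProductSpace 𝕜 E]

lemma inner_inner_smul_right_eq_norm_sq (a x : E) :
    ⟪x, ⟪a, x⟫_𝕜 • a⟫_𝕜 = (‖⟪a, x⟫_𝕜‖ ^ 2 : 𝕜) := by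
  rw [inner_smul_right, ← inner_conj_symm x a, RCLike.mul_conj]

lemma re_inner_half_smul_add_smulRight_innerSL_apply (a b x : E) :
    RCLike.re ⟪x, ((1 / 2 : 𝕜) • ((innerSL 𝕜 a).smulRight a + (innerSL 𝕜 b).smulRight b)) x⟫_𝕜
      = (‖⟪a, x⟫_𝕜‖ ^ 2 + ‖⟪b, x⟫_𝕜‖ ^ 2) / 2 := by
  simp only [smul_apply, add_apply, ContinuousLinearMap.smulRight_apply, innerSL_apply_apply]
  rw [inner_smul_right, inner_add_right, inner_inner_smul_right_eq_norm_sq,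
    inner_inner_smul_right_eq_norm_sq, show (1 / 2 : 𝕜) = ((1 / 2 : ℝ) : 𝕜) by push_cast; ring,
    ← RCLike.ofReal_pow, ← RCLike.ofReal_pow, ← RCLike.ofReal_add, ← RCLike.ofReal_mul,
    RCLike.ofReal_re]
  ring

lemma norm_smul_add_smul_sq_le {a b : E} (ha : ‖a‖ = 1) (hb : ‖b‖ = 1) (α β : 𝕜) :
    ‖α • a + β • b‖ ^ 2 ≤ (‖α‖ ^ 2 + ‖β‖ ^ 2) * (1 + ‖⟪a, b⟫_𝕜‖) := by
  have hcross : RCLike.re ⟪α • a, β • b⟫_𝕜 ≤ ‖α‖ * ‖β‖ * ‖⟪a, b⟫_𝕜‖ :=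
    calc RCLike.re ⟪α • a, β • b⟫_𝕜 ≤ ‖⟪α • a, β • b⟫_𝕜‖ := RCLike.re_le_norm _
      _ = ‖α‖ * ‖β‖ * ‖⟪a, b⟫_𝕜‖ := by
        rw [inner_smul_left, inner_smul_right, norm_mul, norm_mul, RCLike.norm_conj, mul_assoc]
  rw [@norm_add_sq 𝕜, norm_smul, norm_smul, ha, hb]
  nlinarith [two_mul_le_add_sq ‖α‖ ‖β‖, norm_nonneg ⟪a, b⟫_𝕜]

lemma norm_inner_sq_add_norm_inner_sq_le {a b : E} (ha : ‖a‖ = 1) (hb : ‖b‖ = 1) (x : E) :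
    ‖⟪a, x⟫_𝕜‖ ^ 2 + ‖⟪b, x⟫_𝕜‖ ^ 2 ≤ (1 + ‖⟪a, b⟫_𝕜‖) * ‖x‖ ^ 2 := by
  set S := ‖⟪a, x⟫_𝕜‖ ^ 2 + ‖⟪b, x⟫_𝕜‖ ^ 2
  set y := ⟪a, x⟫_𝕜 • a + ⟪b, x⟫_𝕜 • b
  have hS0 : 0 ≤ S := by positivity
  have hSy : S ≤ ‖x‖ * ‖y‖ :=
    calc S = ‖⟪x, y⟫_𝕜‖ := by
          rw [inner_add_right, inner_inner_smul_right_eq_norm_sq,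
            inner_inner_smul_right_eq_norm_sq, ← RCLike.ofReal_pow, ← RCLike.ofReal_pow,
            ← RCLike.ofReal_add, RCLike.norm_ofReal, abs_of_nonneg hS0]
      _ ≤ ‖x‖ * ‖y‖ := norm_inner_le_norm x y
  have hy := norm_smul_add_smul_sq_le ha hb ⟪a, x⟫_𝕜 ⟪b, x⟫_𝕜
  have hS2 : S * S ≤ S * ((1 + ‖⟪a, b⟫_𝕜‖) * ‖x‖ ^ 2) :=
    calc S * S ≤ ‖x‖ ^ 2 * ‖y‖ ^ 2 := by rw [← mul_pow, ← sq]; gcongr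
      _ ≤ ‖x‖ ^ 2 * (S * (1 + ‖⟪a, b⟫_𝕜‖)) := by gcongr
      _ = S * ((1 + ‖⟪a, b⟫_𝕜‖) * ‖x‖ ^ 2) := by ring
  rcases hS0.eq_or_lt with hS | hS
  · rw [← hS]; positivity
  · exact le_of_mul_le_mul_left hS2 hS

lemma exists_norm_eq_one_norm_inner_sq_add_norm_inner_sq_eq {a b : E} (ha : ‖a‖ = 1)
    (hb : ‖b‖ = 1) :
    ∃ x : E, ‖x‖ = 1 ∧ ‖⟪a, x⟫_𝕜‖ ^ 2 + ‖⟪b, x⟫_𝕜‖ ^ 2 = 1 + ‖⟪a, b⟫_𝕜‖ := by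
  obtain ⟨u, hu, hut⟩ := RCLike.exists_norm_eq_mul_self ⟪a, b⟫_𝕜
  set t := ‖⟪a, b⟫_𝕜‖
  have ht : 0 ≤ t := norm_nonneg _
  set z := a + u • b
  have hza : ‖⟪a, z⟫_𝕜‖ = 1 + t :=
    calc ‖⟪a, z⟫_𝕜‖ = ‖((1 + t : ℝ) : 𝕜)‖ := by
          rw [inner_add_right, inner_smul_right, ← hut, inner_self_eq_norm_sq_to_K, ha]
          push_cast
          ring_nf
      _ = 1 + t := RCLike.norm_of_nonneg (by positivity)
  have hzb : ‖⟪b, z⟫_𝕜‖ = 1 + t :=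
    calc ‖⟪b, z⟫_𝕜‖ = ‖u * ⟪z, b⟫_𝕜‖ := by rw [norm_mul, hu, one_mul, norm_inner_symm]
      _ = ‖((1 + t : ℝ) : 𝕜)‖ := by
        rw [inner_add_left, inner_smul_left, inner_self_eq_norm_sq_to_K, hb, mul_add, ← hut,
          ← mul_assoc, RCLike.mul_conj, hu]
        push_cast
        ring_nf
      _ = 1 + t := RCLike.norm_of_nonneg (by positivity)
  have hz : ‖z‖ ^ 2 = 2 * (1 + t) := by
    rw [@norm_add_sq 𝕜, inner_smul_right, ← hut, norm_smul, ha, hu, hb, RCLike.ofReal_re]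
    ring
  have hz0 : z ≠ 0 := by
    rintro hz0
    rw [hz0, norm_zero] at hz
    linarith
  refine ⟨(‖z‖⁻¹ : 𝕜) • z, norm_smul_inv_norm hz0, ?_⟩
  rw [inner_smul_right, inner_smul_right, norm_mul, norm_mul, hza, hzb, norm_inv,
    RCLike.norm_ofReal, abs_norm]
  field_simp
  rw [hz]
  ring

end

theorem norm_average_of_two_projectors_general {E : Type*} [NormedAddCommGroup E]
    [InnerProductSpace ℂ E]
    (a b : E) (ha : ‖a‖ = 1) (hb : ‖b‖ = 1) :
    IsGreatest
      {r : ℝ | ∃ x : E, ‖x‖ = 1 ∧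
        r = (⟪x, (((1 / 2 : ℂ) • ((innerSL ℂ a).smulRight a + (innerSL ℂ b).smulRight b)) x)⟫_ℂ).re}
      ((1 + ‖⟪a, b⟫_ℂ‖) / 2) := by
  simp_rw [← RCLike.re_to_complex, re_inner_half_smul_add_smulRight_innerSL_apply]
  constructor
  · obtain ⟨x, hx, hmax⟩ := exists_norm_eq_one_norm_inner_sq_add_norm_inner_sq_eq (𝕜 := ℂ) ha hb
    exact ⟨x, hx, by rw [hmax]⟩
  · rintro r ⟨x, hx, rfl⟩
    have hle := norm_inner_sq_add_norm_inner_sq_le (𝕜 := ℂ) ha hb x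
    rw [hx, one_pow, mul_one] at hle
    linarith

/-- For unit vectors `a, b` in a finite-dimensional complex inner product space, the
maximum of `⟨x, T x⟩` over unit vectors `x`, where `T = (1/2)(|a⟩⟨a| + |b⟩⟨b|)`,
equals `(1 + |⟨a, b⟩|)/2`. -/
theorem norm_average_of_two_projectors {E : Type*} [NormedAddCommGroup E]
    [InnerProductSpace ℂ E] [FiniteDimensional ℂ E]
    (a b : E) (ha : ‖a‖ = 1) (hb : ‖b‖ = 1) :
    IsGreatest
      {r : ℝ | ∃ x : E, ‖x‖ = 1 ∧
        r = (⟪x, (((1 / 2 : ℂ) • ((innerSL ℂ a).smulRight a + (innerSL ℂ b).smulRight b)) x)⟫_ℂ).re}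
      ((1 + ‖⟪a, b⟫_ℂ‖) / 2) :=
  norm_average_of_two_projectors_general a b ha hb
end
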